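/- arXiv:1204.5415 — 5 statements merged into one kernel-verified Lean document; each statement's English description precedes it below -/
import Mathlib

section
/- Let a ≥ 1 and b be integers with gcd(a,b) = 1 and a+b ≥ 1, let l > m ≥ 0 be integers, and let r, r' ∈ [1,a] be coprime to a with r·r' ≡ b (mod a). For a prime p with p ≡ r (mod a), p divides lcm_{mn < i ≤ ln}{a·i+b} if and only if there exists an integer i₀ ≥ 0 such that (b + a·m·n)/(r' + a·i₀) < p ≤ (b + a·l·n)/(r' + a·i₀). -/
open Finset

/-- `L a b l m n` is `lcm_{m n < i ≤ l n} (a i + b)`. -/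
noncomputable def L (a b l m : ℤ) (n : ℕ) : ℤ :=
  (Finset.Icc (m * (n : ℤ) + 1) (l * (n : ℤ))).lcm (fun i => a * i + b)

/-!
The prime `p` divides the lcm iff it divides some `a i + b` with `m n < i ≤ l n`, i.e. iff
some multiple `p k` lies in `(b + a m n, b + a l n]` and is `≡ b (mod a)`. As `p ≡ r`,
`r r' ≡ b` and `r` is invertible mod `a`, the congruence `p k ≡ b` says `k ≡ r' (mod a)`.
Such a `k` is positive (`p k > b` forces `p k ≥ a + b ≥ 1`), and since `1 ≤ r' ≤ a` the
positive `k ≡ r' (mod a)` are exactly the `r' + a i₀` with `i₀ ≥ 0`.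
-/

theorem Prime.dvd_finset_lcm_iff {ι α : Type*} [CommMonoidWithZero α] [NormalizedGCDMonoid α]
    {p : α} (hp : Prime p) {s : Finset ι} {f : ι → α} :
    p ∣ s.lcm f ↔ ∃ i ∈ s, p ∣ f i :=
  ⟨fun h ↦ (hp.dvd_finsetProd_iff f).1 (h.trans (s.lcm_dvd_prod f)),
    fun ⟨_, hi, h⟩ ↦ h.trans (Finset.dvd_lcm hi)⟩

namespace Int

theorem ModEq.add_le_of_lt {a x y : ℤ} (h : x ≡ y [ZMOD a]) (hyx : y < x) : y + a ≤ x := by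
  obtain ⟨c, hc⟩ := Int.modEq_iff_add_fac.1 h.symm
  rcases le_or_gt a 0 with ha | ha
  · linarith
  · have hc0 : 0 < c := pos_of_mul_pos_right (by linarith) ha.le
    nlinarith

theorem mul_modEq_iff_modEq_of_mul_modEq {a b r r' p k : ℤ} (hr : Int.gcd r a = 1)
    (hp : p ≡ r [ZMOD a]) (hb : r * r' ≡ b [ZMOD a]) :
    p * k ≡ b [ZMOD a] ↔ k ≡ r' [ZMOD a] := by
  have hpk : p * k ≡ r * k [ZMOD a] := hp.mul_right k
  have hcop : IsCoprime a r := Int.isCoprime_iff_gcd_eq_one.2 (by rwa [Int.gcd_comm])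
  refine ⟨fun h ↦ ?_, fun h ↦ hpk.trans ((h.mul_left r).trans hb)⟩
  have hrk : r * k ≡ r * r' [ZMOD a] := (hpk.symm.trans h).trans hb.symm
  rw [Int.modEq_iff_dvd, ← mul_sub] at hrk
  exact Int.modEq_iff_dvd.2 (hcop.dvd_of_dvd_mul_left hrk)

theorem modEq_and_pos_iff_exists_nonneg {a r' k : ℤ} (hr' : 0 < r') (hr'a : r' ≤ a) :
    (k ≡ r' [ZMOD a] ∧ 0 < k) ↔ ∃ i, 0 ≤ i ∧ k = r' + a * i := by
  constructor
  · rintro ⟨hk, hk0⟩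
    obtain ⟨i, rfl⟩ := Int.modEq_iff_add_fac.1 hk.symm
    refine ⟨i, ?_, rfl⟩
    by_contra! hi
    nlinarith
  · rintro ⟨i, hi, rfl⟩
    exact ⟨Int.modEq_add_fac_self, by nlinarith⟩

theorem exists_mem_Icc_dvd_mul_add_iff {a : ℤ} (ha : 0 < a) (b d M N : ℤ) :
    (∃ i ∈ Icc (M + 1) N, d ∣ a * i + b) ↔
      ∃ k, d * k ≡ b [ZMOD a] ∧ b + a * M < d * k ∧ d * k ≤ b + a * N := by
  constructor
  · rintro ⟨i, hi, k, hk⟩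
    rw [mem_Icc] at hi
    refine ⟨k, ?_, ?_, ?_⟩
    · rw [← hk]
      exact Int.modulus_mul_add_modEq_iff.2 rfl
    · nlinarith
    · nlinarith
  · rintro ⟨k, hk, hlo, hhi⟩
    obtain ⟨i, hi⟩ := Int.modEq_iff_add_fac.1 hk.symm
    refine ⟨i, mem_Icc.2 ⟨?_, ?_⟩, k, by linarith⟩
    · exact lt_of_mul_lt_mul_left (by linarith) ha.le
    · exact le_of_mul_le_mul_left (by linarith) ha

end Int

theorem prime_dvd_lcm_iff_interval_general (a b l m : ℤ) (ha : 1 ≤ a)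
    (hab : 1 ≤ a + b) (hm : 0 ≤ m)
    (r r' : ℤ) (hr'1 : 1 ≤ r') (hr'a : r' ≤ a)
    (hrcop : Int.gcd r a = 1)
    (hrr' : r * r' ≡ b [ZMOD a])
    (p : ℕ) (hp : p.Prime) (hpr : (p : ℤ) ≡ r [ZMOD a]) (n : ℕ) :
    (p : ℤ) ∣ L a b l m n ↔
      ∃ i₀ : ℤ, 0 ≤ i₀ ∧
        ((b + a * m * (n : ℤ) : ℤ) : ℝ) / ((r' + a * i₀ : ℤ) : ℝ) < (p : ℝ) ∧
        (p : ℝ) ≤ ((b + a * l * (n : ℤ) : ℤ) : ℝ) / ((r' + a * i₀ : ℤ) : ℝ) := by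
  have hp0 : (0 : ℤ) < p := mod_cast hp.pos
  have hmn : 0 ≤ m * n := mul_nonneg hm n.cast_nonneg
  have hk_iff (k : ℤ) : p * k ≡ b [ZMOD a] ↔ k ≡ r' [ZMOD a] :=
    Int.mul_modEq_iff_modEq_of_mul_modEq hrcop hpr hrr'
  have hreal (k : ℤ) (hk : 0 < k) :
      (((b + a * m * n : ℤ) : ℝ) / (k : ℝ) < p ∧
          (p : ℝ) ≤ ((b + a * l * n : ℤ) : ℝ) / k) ↔
        b + a * (m * n) < p * k ∧ p * k ≤ b + a * (l * n) := by
    rw [div_lt_iff₀ (mod_cast hk), le_div_iff₀ (mod_cast hk), ← mul_assoc, ← mul_assoc]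
    norm_cast
  rw [L, (Nat.prime_iff_prime_int.mp hp).dvd_finset_lcm_iff,
    Int.exists_mem_Icc_dvd_mul_add_iff (by omega)]
  constructor
  · rintro ⟨k, hkb, hlo, hhi⟩
    have hbk : b + a ≤ p * k := hkb.add_le_of_lt (by nlinarith)
    have hk0 : 0 < k := pos_of_mul_pos_right (by linarith) hp0.le
    obtain ⟨i₀, hi₀, rfl⟩ :=
      (Int.modEq_and_pos_iff_exists_nonneg hr'1 hr'a).1 ⟨(hk_iff k).1 hkb, hk0⟩
    exact ⟨i₀, hi₀, (hreal _ hk0).2 ⟨hlo, hhi⟩⟩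
  · rintro ⟨i₀, hi₀, hbounds⟩
    obtain ⟨hk, hk0⟩ := (Int.modEq_and_pos_iff_exists_nonneg hr'1 hr'a).2 ⟨i₀, hi₀, rfl⟩
    exact ⟨_, (hk_iff _).2 hk, (hreal _ hk0).1 hbounds⟩

theorem prime_dvd_lcm_iff_interval (a b l m : ℤ) (ha : 1 ≤ a) (hgcd : Int.gcd a b = 1)
    (hab : 1 ≤ a + b) (hlm : m < l) (hm : 0 ≤ m)
    (r r' : ℤ) (hr1 : 1 ≤ r) (hra : r ≤ a) (hr'1 : 1 ≤ r') (hr'a : r' ≤ a)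
    (hrcop : Int.gcd r a = 1) (hr'cop : Int.gcd r' a = 1)
    (hrr' : r * r' ≡ b [ZMOD a])
    (p : ℕ) (hp : p.Prime) (hpr : (p : ℤ) ≡ r [ZMOD a]) (n : ℕ) (hn : 1 ≤ n) :
    (p : ℤ) ∣ L a b l m n ↔
      ∃ i₀ : ℤ, 0 ≤ i₀ ∧
        ((b + a * m * (n : ℤ) : ℤ) : ℝ) / ((r' + a * i₀ : ℤ) : ℝ) < (p : ℝ) ∧
        (p : ℝ) ≤ ((b + a * l * (n : ℤ) : ℤ) : ℝ) / ((r' + a * i₀ : ℤ) : ℝ) :=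
  prime_dvd_lcm_iff_interval_general a b l m ha hab hm r r' hr'1 hr'a hrcop hrr' p hp hpr n
end

section
/- Let a ≥ 1, let l > m ≥ 0 be integers, let r' ∈ [1,a] with gcd(r',a)=1, and set H = ⌊(a·l − (l−m)·r')/(a·(l−m))⌋. Then for every positive integer n and every integer b with 1 ≤ b ≤ a, one has (l−m)·n < (b + a·l·n)/(r' + a·H). -/
/-!
Writing `k = l - m`, the floor `H` is the integer quotient of `a * l - k * r'` by `a * k`, and the
division-with-remainder bounds for that quotient say exactly that `a * m < k * (r' + a * H) ≤ a * l`.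
The left bound makes the denominator `r' + a * H` positive, and the right bound gives
`k * n * (r' + a * H) ≤ a * l * n < b + a * l * n`.
-/

theorem mul_add_mul_ediv_mem_Ioc {a k l r : ℤ} (h : 0 < a * k) :
    k * (r + a * ((a * l - k * r) / (a * k))) ∈ Set.Ioc (a * (l - k)) (a * l) := by
  have hle := Int.mul_ediv_self_le (x := a * l - k * r) h.ne'
  have hlt := Int.lt_mul_ediv_self_add (x := a * l - k * r) h
  constructor <;> linarith

theorem key_inequality_upper_general (a l m r' : ℤ) (ha : 1 ≤ a) (hlm : m < l) (hm : 0 ≤ m)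
    (H : ℤ) (hH : H = ⌊((a * l - (l - m) * r' : ℤ) : ℝ) / ((a * (l - m) : ℤ) : ℝ)⌋) :
    ∀ n : ℕ, 1 ≤ n → ∀ b : ℤ, 1 ≤ b → b ≤ a →
      (((l - m) * (n : ℤ) : ℤ) : ℝ) <
        ((b + a * l * (n : ℤ) : ℤ) : ℝ) / ((r' + a * H : ℤ) : ℝ) := by
  intro n _ b hb _
  have hk : 0 < l - m := sub_pos.2 hlm
  have hH_ediv : H = (a * l - (l - m) * r') / (a * (l - m)) := by
    rw [hH, Int.floor_div_cast_of_nonneg (by positivity), Int.floor_intCast]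
  obtain ⟨hlow, hup⟩ := hH_ediv ▸ mul_add_mul_ediv_mem_Ioc (r := r') (mul_pos (by omega) hk)
  rw [sub_sub_cancel] at hlow
  have hden : 0 < r' + a * H := pos_of_mul_pos_right (hlow.trans_le' (by positivity)) hk.le
  rw [lt_div_iff₀ (by exact_mod_cast hden)]
  exact_mod_cast calc
    (l - m) * n * (r' + a * H) = (l - m) * (r' + a * H) * n := by ring
    _ ≤ a * l * n := by gcongr
    _ < b + a * l * n := by linarith

theorem key_inequality_upper (a l m r' : ℤ) (ha : 1 ≤ a) (hlm : m < l) (hm : 0 ≤ m)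
    (hr'1 : 1 ≤ r') (hr'a : r' ≤ a) (hr'cop : Int.gcd r' a = 1)
    (H : ℤ) (hH : H = ⌊((a * l - (l - m) * r' : ℤ) : ℝ) / ((a * (l - m) : ℤ) : ℝ)⌋) :
    ∀ n : ℕ, 1 ≤ n → ∀ b : ℤ, 1 ≤ b → b ≤ a →
      (((l - m) * (n : ℤ) : ℤ) : ℝ) <
        ((b + a * l * (n : ℤ) : ℤ) : ℝ) / ((r' + a * H : ℤ) : ℝ) :=
  key_inequality_upper_general a l m r' ha hlm hm H hH
end

section
/- Let a ≥ 1, let l > m ≥ 0 be integers, let b, r' ∈ [1,a] with gcd(r',a) = gcd(b,a) = 1, and set H = ⌊(a·l − (l−m)·r')/(a·(l−m))⌋. If l ≤ (a+r')·m/r' (so H ≥ 1), then for every positive integer n, (b + a·m·n)/(r' + a·H) < (l−m)·n + 1. -/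
/-!
Write `d = l - m`. The floor has integer numerator and positive integer denominator, so `H` is the
Euclidean quotient `(a l - d r') / (a d)`. Since `a l - d r' = a d + (a m - d r')` and the case
hypothesis says `d r' ≤ a m`, we get `H ≥ 1`, hence `r' + a H > a ≥ b`. The quotient property
`a l - d r' < (H + 1) a d` rearranges to `a m < d (r' + a H)`, and the two bounds combine to
`b + a m n < (r' + a H)(d n + 1)`.
-/

lemma mul_lt_sub_mul_add_mul_ediv (a l m r' : ℤ) (h : 0 < a * (l - m)) :
    a * m < (l - m) * (r' + a * ((a * l - (l - m) * r') / (a * (l - m)))) := by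
  linear_combination Int.lt_ediv_add_one_mul_self (a * l - (l - m) * r') h

lemma add_mul_lt_mul_mul_add_one {x y D d n : ℤ} (hx : x < D) (hy : y < d * D) (hn : 0 ≤ n) :
    x + y * n < D * (d * n + 1) := by
  nlinarith

theorem key_inequality_lower_general (a l m b r' : ℤ) (ha : 1 ≤ a) (hlm : m < l)
    (hba : b ≤ a) (hr'1 : 1 ≤ r')
    (H : ℤ) (hH : H = ⌊((a * l - (l - m) * r' : ℤ) : ℝ) / ((a * (l - m) : ℤ) : ℝ)⌋)
    (hcase : (l : ℝ) ≤ (((a + r') * m : ℤ) : ℝ) / (r' : ℝ)) :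
    ∀ n : ℕ, 1 ≤ n →
      ((b + a * m * (n : ℤ) : ℤ) : ℝ) / ((r' + a * H : ℤ) : ℝ) <
        (((l - m) * (n : ℤ) : ℤ) : ℝ) + 1 := by
  intro n _
  have hden : 0 < a * (l - m) := mul_pos (by omega) (by omega)
  rw [Int.floor_div_cast_of_nonneg hden.le, Int.floor_intCast] at hH
  replace hcase : (l - m) * r' ≤ a * m := by
    rw [le_div_iff₀ (by exact_mod_cast hr'1)] at hcase
    linarith [(by exact_mod_cast hcase : l * r' ≤ (a + r') * m)]
  have hH1 : 1 ≤ H := hH ▸ Int.le_ediv_of_mul_le hden (by linarith)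
  have hb : b < r' + a * H := by nlinarith
  have hD : 0 < r' + a * H := add_pos (by omega) (mul_pos (by omega) (by omega))
  have key : ((b + a * m * n : ℤ) : ℝ) < ((r' + a * H) * ((l - m) * n + 1) : ℤ) := by
    exact_mod_cast add_mul_lt_mul_mul_add_one hb
      (hH ▸ mul_lt_sub_mul_add_mul_ediv a l m r' hden) (Int.natCast_nonneg n)
  rw [div_lt_iff₀ (by exact_mod_cast hD)]
  push_cast at key ⊢
  linarith

theorem key_inequality_lower (a l m b r' : ℤ) (ha : 1 ≤ a) (hlm : m < l) (hm : 0 ≤ m)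
    (hb1 : 1 ≤ b) (hba : b ≤ a) (hr'1 : 1 ≤ r') (hr'a : r' ≤ a)
    (hr'cop : Int.gcd r' a = 1) (hbcop : Int.gcd b a = 1)
    (H : ℤ) (hH : H = ⌊((a * l - (l - m) * r' : ℤ) : ℝ) / ((a * (l - m) : ℤ) : ℝ)⌋)
    (hcase : (l : ℝ) ≤ (((a + r') * m : ℤ) : ℝ) / (r' : ℝ)) :
    ∀ n : ℕ, 1 ≤ n →
      ((b + a * m * (n : ℤ) : ℤ) : ℝ) / ((r' + a * H : ℤ) : ℝ) <
        (((l - m) * (n : ℤ) : ℤ) : ℝ) + 1 :=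
  key_inequality_lower_general a l m b r' ha hlm hba hr'1 H hH hcase
end

section
/- Let a ≥ 1, let l > m ≥ 0 be integers, let b, r' ∈ [1,a], and set H = ⌊(a·l − (l−m)·r')/(a·(l−m))⌋. Then for every integer i with 1 ≤ i ≤ H and every positive integer n, (b + a·m·n)/(r' + a·(i−1)) > (b + a·l·n)/(r' + a·i); consequently the intervals ((b+amn)/(r'+ai), (b+aln)/(r'+ai)] for 0 ≤ i ≤ H are pairwise disjoint. -/
/-!
Clearing denominators, the inequality between consecutive intervals reads
`(b + a m n)(r' + a i) - (b + a l n)(r' + a (i - 1)) = a b + a n (a l - (l - m) r' - a (l - m) i)`,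
and the bracket is nonnegative exactly when `i ≤ (a l - (l - m) r') / (a (l - m))`, i.e. when
`i ≤ H`. So each interval starts strictly above the end of the next one; since `m < l` every
interval starts below its own end, and chaining these inequalities separates any two intervals.
-/

theorem Int.floor_intCast_div_intCast_mul_le {p q : ℤ} (hq : 0 < q) :
    ⌊(p : ℝ) / q⌋ * q ≤ p := by
  have h := Int.floor_le ((p : ℝ) / q)
  rw [le_div_iff₀ (by exact_mod_cast hq)] at h
  exact_mod_cast h

theorem add_mul_div_lt_add_mul_div_pred {K : Type*} [Field K] [LinearOrder K]
    [IsStrictOrderedRing K] {a b l m n r' i : K} (ha : 0 < a) (hb : 0 < b) (hn : 0 ≤ n)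
    (hd : 0 < r' + a * (i - 1)) (hi : a * (l - m) * i ≤ a * l - (l - m) * r') :
    (b + a * l * n) / (r' + a * i) < (b + a * m * n) / (r' + a * (i - 1)) := by
  rw [div_lt_div_iff₀ (by linarith) hd]
  nlinarith [mul_nonneg (mul_nonneg ha.le hn) (sub_nonneg.2 hi), mul_pos ha hb]

theorem lt_of_forall_lt_pred {α : Type*} [Preorder α] {x y : ℤ → α} {i j : ℤ}
    (hxy : ∀ k, i < k → k < j → x k ≤ y k) (hyx : ∀ k, i < k → k ≤ j → y k < x (k - 1))
    (hij : i < j) : y j < x i := by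
  induction j, hij using Int.leInduction with
  | base => simpa using hyx (i + 1) (by omega) le_rfl
  | succ j hj ih =>
    calc y (j + 1) < x j := by simpa using hyx (j + 1) (by omega) le_rfl
      _ ≤ y j := hxy j (by omega) (by omega)
      _ < x i := ih (fun k hik hkj => hxy k hik (by omega)) (fun k hik hkj => hyx k hik (by omega))

theorem intervals_disjoint_general (a l m b r' : ℤ) (ha : 1 ≤ a) (hlm : m < l)
    (hb1 : 1 ≤ b) (hr'1 : 1 ≤ r')
    (H : ℤ) (hH : H = ⌊((a * l - (l - m) * r' : ℤ) : ℝ) / ((a * (l - m) : ℤ) : ℝ)⌋) :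
    (∀ n : ℕ, 1 ≤ n → ∀ i : ℤ, 1 ≤ i → i ≤ H →
      ((b + a * m * (n : ℤ) : ℤ) : ℝ) / ((r' + a * (i - 1) : ℤ) : ℝ) >
        ((b + a * l * (n : ℤ) : ℤ) : ℝ) / ((r' + a * i : ℤ) : ℝ)) ∧
    (∀ n : ℕ, 1 ≤ n → ∀ i j : ℤ, 0 ≤ i → i < j → j ≤ H →
      Disjoint
        (Set.Ioc (((b + a * m * (n : ℤ) : ℤ) : ℝ) / ((r' + a * i : ℤ) : ℝ))
          (((b + a * l * (n : ℤ) : ℤ) : ℝ) / ((r' + a * i : ℤ) : ℝ)))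
        (Set.Ioc (((b + a * m * (n : ℤ) : ℤ) : ℝ) / ((r' + a * j : ℤ) : ℝ))
          (((b + a * l * (n : ℤ) : ℤ) : ℝ) / ((r' + a * j : ℤ) : ℝ)))) := by
  have hq : 0 < a * (l - m) := mul_pos (by omega) (by omega)
  have hH_le : H * (a * (l - m)) ≤ a * l - (l - m) * r' :=
    hH ▸ Int.floor_intCast_div_intCast_mul_le hq
  have step (n : ℕ) (i : ℤ) (hi : 1 ≤ i) (hiH : i ≤ H) :
      ((b + a * l * (n : ℤ) : ℤ) : ℝ) / ((r' + a * i : ℤ) : ℝ) <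
        ((b + a * m * (n : ℤ) : ℤ) : ℝ) / ((r' + a * (i - 1) : ℤ) : ℝ) := by
    have hd : (0 : ℤ) < r' + a * (i - 1) := by nlinarith
    have hi' : a * (l - m) * i ≤ a * l - (l - m) * r' := by
      nlinarith [mul_le_mul_of_nonneg_left hiH hq.le]
    push_cast
    exact add_mul_div_lt_add_mul_div_pred (by exact_mod_cast ha) (by exact_mod_cast hb1)
      n.cast_nonneg (by exact_mod_cast hd) (by exact_mod_cast hi')
  refine ⟨fun n _ i hi hiH => step n i hi hiH, fun n _ i j hi hij hjH => ?_⟩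
  refine (Set.Ioc_disjoint_Ioc_of_le (lt_of_forall_lt_pred
    (x := fun k : ℤ => ((b + a * m * (n : ℤ) : ℤ) : ℝ) / ((r' + a * k : ℤ) : ℝ))
    (y := fun k : ℤ => ((b + a * l * (n : ℤ) : ℤ) : ℝ) / ((r' + a * k : ℤ) : ℝ))
    (fun k hik _ => ?_) (fun k hik hkj => step n k (by omega) (by omega)) hij).le).symm
  have hd : (0 : ℝ) < ((r' + a * k : ℤ) : ℝ) := by exact_mod_cast (by nlinarith : 0 < r' + a * k)
  gcongr

theorem intervals_disjoint (a l m b r' : ℤ) (ha : 1 ≤ a) (hlm : m < l) (hm : 0 ≤ m)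
    (hb1 : 1 ≤ b) (hba : b ≤ a) (hr'1 : 1 ≤ r') (hr'a : r' ≤ a)
    (H : ℤ) (hH : H = ⌊((a * l - (l - m) * r' : ℤ) : ℝ) / ((a * (l - m) : ℤ) : ℝ)⌋) :
    (∀ n : ℕ, 1 ≤ n → ∀ i : ℤ, 1 ≤ i → i ≤ H →
      ((b + a * m * (n : ℤ) : ℤ) : ℝ) / ((r' + a * (i - 1) : ℤ) : ℝ) >
        ((b + a * l * (n : ℤ) : ℤ) : ℝ) / ((r' + a * i : ℤ) : ℝ)) ∧
    (∀ n : ℕ, 1 ≤ n → ∀ i j : ℤ, 0 ≤ i → i < j → j ≤ H →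
      Disjoint
        (Set.Ioc (((b + a * m * (n : ℤ) : ℤ) : ℝ) / ((r' + a * i : ℤ) : ℝ))
          (((b + a * l * (n : ℤ) : ℤ) : ℝ) / ((r' + a * i : ℤ) : ℝ)))
        (Set.Ioc (((b + a * m * (n : ℤ) : ℤ) : ℝ) / ((r' + a * j : ℤ) : ℝ))
          (((b + a * l * (n : ℤ) : ℤ) : ℝ) / ((r' + a * j : ℤ) : ℝ)))) :=
  intervals_disjoint_general a l m b r' ha hlm hb1 hr'1 H hH
end

section
/- Let a ≥ 1 and b be integers with 1 ≤ b ≤ a, gcd(a,b) = 1, let l > m ≥ 0 be integers, let r, r' ∈ [1,a] be coprime to a with r·r' ≡ b (mod a), and suppose l·r' > (a+r')·m. Then for all sufficiently large n, every prime p ≡ r (mod a) with p ≤ (b+a·l·n)/r' and p ∉ ((l−m)·n, (l−m)·n + b/r'] divides lcm_{mn < i ≤ ln}{a·i+b}. -/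
/-! A prime `p ≡ r (mod a)` satisfies `r' p = a c + b` for some `c`, so `p ∣ a i + b` for every
`i ≡ c (mod p)`. If `p ≤ (l - m) n`, some such `i` lies in the window `(m n, l n]` of length
`(l - m) n`. Otherwise `p` is beyond the excluded interval, and then `c` itself lies in the window:
`c ≤ l n` comes from `p ≤ (b + a l n) / r'`, and `c > m n` from `a m < r' (l - m)`, which is the
hypothesis `(a + r') m < l r'`. -/

open Finset Filter

theorem Int.exists_mem_Ioc_modEq {p lo hi : ℤ} (hp : 0 < p) (h : p ≤ hi - lo) (c : ℤ) :
    ∃ i ∈ Set.Ioc lo hi, i ≡ c [ZMOD p] := by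
  refine ⟨toIocMod hp (hi - p) c, ?_, ?_⟩
  · have hmem := toIocMod_mem_Ioc hp (hi - p) c
    rw [sub_add_cancel] at hmem
    exact ⟨by linarith [hmem.1], hmem.2⟩
  · rw [Int.modEq_iff_dvd, self_sub_toIocMod_eq_mul]
    exact dvd_mul_left p _

theorem Int.cast_le_cast_div_iff {x y d : ℤ} (hd : 0 < d) :
    (x : ℝ) ≤ (y : ℝ) / d ↔ d * x ≤ y := by
  rw [le_div_iff₀ (by exact_mod_cast hd), mul_comm]
  exact_mod_cast Iff.rfl

theorem Int.cast_add_div_lt_cast_iff {x y z d : ℤ} (hd : 0 < d) :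
    (y : ℝ) + (z : ℝ) / d < x ↔ d * y + z < d * x := by
  rw [← lt_sub_iff_add_lt', div_lt_iff₀ (by exact_mod_cast hd), sub_mul, lt_sub_iff_add_lt',
    mul_comm, mul_comm (x : ℝ)]
  exact_mod_cast Iff.rfl

section

variable {a b l m : ℤ} {n : ℕ}

theorem dvd_L_of_dvd {x i : ℤ} (hi : i ∈ Set.Ioc (m * n) (l * n)) (hx : x ∣ a * i + b) :
    x ∣ L a b l m n :=
  hx.trans <| Finset.dvd_lcm <| Finset.mem_Icc.mpr ⟨hi.1, hi.2⟩

theorem dvd_L_of_le_sub_mul {p c : ℤ} (hp : 0 < p) (hpc : p ∣ a * c + b)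
    (hpn : p ≤ (l - m) * n) : p ∣ L a b l m n := by
  obtain ⟨i, hi, hic⟩ := Int.exists_mem_Ioc_modEq hp (by linarith : p ≤ l * n - m * n) c
  exact dvd_L_of_dvd hi (((hic.mul_left a).add_right b).dvd_iff.mpr hpc)

end

theorem case_one_prime_coverage_general (a b l m r r' : ℤ) (ha : 1 ≤ a)
    (hr'1 : 1 ≤ r')
    (hrr' : r * r' ≡ b [ZMOD a]) (hcase : (a + r') * m < l * r') :
    ∃ N : ℕ, ∀ n : ℕ, N ≤ n → ∀ p : ℕ, p.Prime → (p : ℤ) ≡ r [ZMOD a] →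
      (p : ℝ) ≤ ((b + a * l * (n : ℤ) : ℤ) : ℝ) / (r' : ℝ) →
      (p : ℝ) ∉ Set.Ioc (((l - m) * (n : ℤ) : ℤ) : ℝ)
        ((((l - m) * (n : ℤ) : ℤ) : ℝ) + (b : ℝ) / (r' : ℝ)) →
      (p : ℤ) ∣ L a b l m n := by
  refine ⟨0, fun n _ p hp hpr hple hpexc => ?_⟩
  obtain ⟨c, hc⟩ := Int.modEq_iff_add_fac.mp ((hpr.mul_right r').trans hrr').symm
  have hpc : (p : ℤ) ∣ a * c + b := ⟨r', by linarith⟩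
  have hupper : r' * p ≤ b + a * l * n :=
    (Int.cast_le_cast_div_iff (by linarith)).mp (by exact_mod_cast hple)
  have hc_le : c ≤ l * n := le_of_mul_le_mul_left (by linarith) (by linarith : 0 < a)
  rcases not_and_or.mp hpexc with hsmall | hlarge
  · exact dvd_L_of_le_sub_mul (by exact_mod_cast hp.pos) hpc (by exact_mod_cast not_lt.mp hsmall)
  · have hlower : r' * ((l - m) * n) + b < r' * p :=
      (Int.cast_add_div_lt_cast_iff (by linarith)).mp (by exact_mod_cast not_le.mp hlarge)
    have hmn_lt : a * (m * n) < a * c :=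
      calc a * (m * n) ≤ r' * ((l - m) * n) := by nlinarith [Int.natCast_nonneg n]
        _ < a * c := by linarith
    exact dvd_L_of_dvd ⟨lt_of_mul_lt_mul_left hmn_lt (by linarith), hc_le⟩ hpc

theorem case_one_prime_coverage (a b l m r r' : ℤ) (ha : 1 ≤ a)
    (hb1 : 1 ≤ b) (hba : b ≤ a) (hgcd : Int.gcd a b = 1) (hlm : m < l) (hm : 0 ≤ m)
    (hr1 : 1 ≤ r) (hra : r ≤ a) (hr'1 : 1 ≤ r') (hr'a : r' ≤ a)
    (hrcop : Int.gcd r a = 1) (hr'cop : Int.gcd r' a = 1)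
    (hrr' : r * r' ≡ b [ZMOD a]) (hcase : (a + r') * m < l * r') :
    ∃ N : ℕ, ∀ n : ℕ, N ≤ n → ∀ p : ℕ, p.Prime → (p : ℤ) ≡ r [ZMOD a] →
      (p : ℝ) ≤ ((b + a * l * (n : ℤ) : ℤ) : ℝ) / (r' : ℝ) →
      (p : ℝ) ∉ Set.Ioc (((l - m) * (n : ℤ) : ℤ) : ℝ)
        ((((l - m) * (n : ℤ) : ℤ) : ℝ) + (b : ℝ) / (r' : ℝ)) →
      (p : ℤ) ∣ L a b l m n :=
  case_one_prime_coverage_general a b l m r r' ha hr'1 hrr' hcase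
end
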